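/- arXiv:math/0307070 — 3 statements merged into one kernel-verified Lean document; each statement's English description precedes it below -/
import Mathlib

section
/- Let n ≥ 3 and let F be a closed subset of ℝ^n with Hausdorff dimension strictly less than n − 1. Then ℝ^n \ F is path-connected. -/
open MeasureTheory Set Module

/-!
Given `x, y ∉ F`, take an affine hyperplane `H` lying beyond both. The points of `H` whose
segment to `x` meets `F` lie in the image of `F` under the central projection from `x` onto `H`,
a map that is `C¹` on the open half-space beyond `x`; so they form a set of dimension at most
`dimH F < dim H`, and likewise for `y`. Hence some `z ∈ H` sees both `x` and `y`, and the
broken line `x – z – y` avoids `F`.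
-/

variable {E : Type*} [NormedAddCommGroup E] [NormedSpace ℝ E] [FiniteDimensional ℝ E]

theorem dimH_hyperplane {ℓ : E →L[ℝ] ℝ} (hℓ : ℓ ≠ 0) (R : ℝ) :
    dimH {z | ℓ z = R} = finrank ℝ E - 1 := by
  have hℓ' : (ℓ : Dual ℝ E) ≠ 0 := fun h => hℓ (ContinuousLinearMap.coe_injective h)
  obtain ⟨z₀, hz₀⟩ := (ℓ : Dual ℝ E).surjective hℓ' R
  have hH : {z | ℓ z = R} = (AffineSubspace.mk' z₀ (LinearMap.ker (ℓ : Dual ℝ E)) : Set E) := by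
    ext z
    simp [AffineSubspace.mem_mk', sub_eq_zero, ← hz₀]
  rw [hH, Real.Convex.dimH_eq_finrank_vectorSpan (AffineSubspace.convex _) ⟨z₀, by simp⟩,
    ← direction_affineSpan, AffineSubspace.affineSpan_coe, AffineSubspace.direction_mk',
    ← Dual.finrank_ker_add_one_of_ne_zero hℓ']
  simp

theorem dimH_hyperplane_inter_segment_meets_le {ℓ : E →L[ℝ] ℝ} {x : E} {F : Set E}
    (hx : x ∉ F) {R : ℝ} (hR : ℓ x < R) :
    dimH {z | ℓ z = R ∧ (segment ℝ x z ∩ F).Nonempty} ≤ dimH F := by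
  set s : Set E := {p | ℓ x < ℓ p}
  -- central projection from `x` onto the hyperplane `ℓ = R`
  set π : E → E := fun p => x + ((R - ℓ x) / (ℓ p - ℓ x)) • (p - x)
  have hπ : ContDiffOn ℝ 1 π s := by
    refine contDiffOn_const.add (ContDiffOn.smul ?_ (contDiff_id.sub contDiff_const).contDiffOn)
    exact contDiffOn_const.div (ℓ.contDiff.sub contDiff_const).contDiffOn
      fun p hp => sub_ne_zero.2 (ne_of_gt hp)
  have hsub : {z | ℓ z = R ∧ (segment ℝ x z ∩ F).Nonempty} ⊆ π '' (F ∩ s) := by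
    rintro z ⟨hzR, p, hpseg, hpF⟩
    obtain ⟨t, ⟨ht₀, -⟩, rfl⟩ := segment_eq_image' ℝ x z ▸ hpseg
    have ht : t ≠ 0 := by
      rintro rfl
      exact hx (by simpa using hpF)
    have hℓp : ℓ (x + t • (z - x)) - ℓ x = t * (R - ℓ x) := by simp [hzR]
    refine ⟨x + t • (z - x), ⟨hpF, ?_⟩, ?_⟩
    · show ℓ x < ℓ (x + t • (z - x))
      nlinarith [lt_of_le_of_ne ht₀ (Ne.symm ht)]
    · simp only [π, hℓp, add_sub_cancel_left, smul_smul]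
      have : (R - ℓ x) / (t * (R - ℓ x)) * t = 1 := by
        field_simp [sub_ne_zero.2 hR.ne']
      simp [this]
  calc dimH {z | ℓ z = R ∧ (segment ℝ x z ∩ F).Nonempty}
      ≤ dimH (π '' (F ∩ s)) := dimH_mono hsub
    _ ≤ dimH (F ∩ s) :=
      hπ.dimH_image_le (convex_halfSpace_gt ℓ.isLinear _) inter_subset_right
    _ ≤ dimH F := dimH_mono inter_subset_left

theorem joinedIn_compl_of_dimH_lt {F : Set E} (hF : dimH F < finrank ℝ E - 1) {x y : E}
    (hx : x ∉ F) (hy : y ∉ F) : JoinedIn Fᶜ x y := by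
  have : Nontrivial E := Module.nontrivial_of_finrank_pos <| Nat.pos_of_ne_zero fun h => by
    rw [h, Nat.cast_zero, zero_tsub] at hF
    exact not_lt_zero hF
  obtain ⟨v, hv⟩ := exists_ne (0 : E)
  obtain ⟨ℓ, hℓv⟩ := SeparatingDual.exists_ne_zero (R := ℝ) hv
  have hℓ : ℓ ≠ 0 := by rintro rfl; exact hℓv rfl
  set R := max (ℓ x) (ℓ y) + 1
  have hxR : ℓ x < R := lt_add_of_le_of_pos (le_max_left _ _) one_pos
  have hyR : ℓ y < R := lt_add_of_le_of_pos (le_max_right _ _) one_pos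
  set hidden := {z | ℓ z = R ∧ (segment ℝ x z ∩ F).Nonempty} ∪
    {z | ℓ z = R ∧ (segment ℝ y z ∩ F).Nonempty}
  have hdim_hidden : dimH hidden < dimH {z | ℓ z = R} := by
    rw [dimH_union, dimH_hyperplane hℓ]
    exact max_lt ((dimH_hyperplane_inter_segment_meets_le hx hxR).trans_lt hF)
      ((dimH_hyperplane_inter_segment_meets_le hy hyR).trans_lt hF)
  obtain ⟨z, hzR, hz⟩ : ∃ z, ℓ z = R ∧ z ∉ hidden :=
    not_subset.1 fun h => (dimH_mono h).not_gt hdim_hidden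
  have hxz : segment ℝ x z ⊆ Fᶜ := fun p hp hpF => hz (Or.inl ⟨hzR, p, hp, hpF⟩)
  have hyz : segment ℝ y z ⊆ Fᶜ := fun p hp hpF => hz (Or.inr ⟨hzR, p, hp, hpF⟩)
  exact (JoinedIn.of_segment_subset hxz).trans (JoinedIn.of_segment_subset hyz).symm

theorem isPathConnected_compl_of_dimH_lt {F : Set E} (hF : dimH F < finrank ℝ E - 1) :
    IsPathConnected Fᶜ := by
  obtain ⟨x, hx⟩ := (dense_compl_of_dimH_lt_finrank (hF.trans_le tsub_le_self)).nonempty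
  exact ⟨x, hx, fun {_} hy => joinedIn_compl_of_dimH_lt hF hx hy⟩

theorem complement_pathConnected_of_dimH_lt_general (n : ℕ)
    (F : Set (EuclideanSpace ℝ (Fin n)))
    (hdim : dimH F < (n : ENNReal) - 1) :
    IsPathConnected Fᶜ :=
  isPathConnected_compl_of_dimH_lt (by rwa [finrank_euclideanSpace_fin])

theorem complement_pathConnected_of_dimH_lt (n : ℕ) (hn : 3 ≤ n)
    (F : Set (EuclideanSpace ℝ (Fin n))) (hF : IsClosed F)
    (hdim : dimH F < (n : ENNReal) - 1) :
    IsPathConnected Fᶜ :=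
  complement_pathConnected_of_dimH_lt_general n F hdim
end

section
/- Let F be a closed subset of ℝ^n (n ≥ 3) with (n−1)-dimensional Hausdorff measure zero. Then ℝ^n \ F is path-connected. -/
/-!
For `x ∉ F`, every point `z` whose segment `[x, z]` meets `F` is of the form `x + s • (f - x)`
with `f ∈ F`, so this "shadow" of `F` seen from `x` is the image of `F × ℝ` under a locally
Lipschitz map. As `μH[n - 1] F = 0` forces `μH[n] (F × ℝ) = 0`, shadows are `μH[n]`-null. Given
`x, y ∉ F`, pick `z` outside `F` and both shadows; the segments `[x, z]` and `[z, y]` avoid `F`.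
-/

open MeasureTheory Set Metric Filter
open scoped NNReal ENNReal Topology

theorem ediam_prod_le {α β : Type*} [EMetricSpace α] [EMetricSpace β] (s : Set α) (t : Set β) :
    ediam (s ×ˢ t) ≤ max (ediam s) (ediam t) :=
  ediam_le fun _ hp _ hq => max_le_max (edist_le_ediam_of_mem hp.1 hq.1)
    (edist_le_ediam_of_mem hp.2 hq.2)

theorem exists_mem_Icc_add_mul {a b u δ : ℝ} (hδ : 0 < δ) (hu : u ∈ Icc a b) :
    ∃ m < ⌊(b - a) / δ⌋₊ + 1, u ∈ Icc (a + m * δ) (a + (m + 1) * δ) := by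
  have hua : 0 ≤ (u - a) / δ := div_nonneg (by linarith [hu.1]) hδ.le
  refine ⟨⌊(u - a) / δ⌋₊, Nat.lt_succ_of_le (Nat.floor_le_floor ?_), ?_, ?_⟩
  · gcongr; exact hu.2
  · linarith [(le_div_iff₀ hδ).1 (Nat.floor_le hua)]
  · linarith [(div_lt_iff₀ hδ).1 (Nat.lt_floor_add_one ((u - a) / δ))]

theorem exists_boxes_cover_prod_Icc {X : Type*} [EMetricSpace X] {t : Set X} {δ : ℝ} (hδ : 0 < δ)
    (ht : ediam t ≤ ENNReal.ofReal δ) {a b : ℝ} (hab : a ≤ b) :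
    ∃ N : ℕ, (N : ℝ) ≤ (b - a) / δ + 1 ∧ ∃ box : Fin N → Set (X × ℝ),
      t ×ˢ Icc a b ⊆ ⋃ k, box k ∧ ∀ k, ediam (box k) ≤ ENNReal.ofReal δ := by
  refine ⟨⌊(b - a) / δ⌋₊ + 1, ?_, fun k => t ×ˢ Icc (a + k * δ) (a + (k + 1) * δ), ?_, fun k => ?_⟩
  · push_cast
    linarith [Nat.floor_le (div_nonneg (sub_nonneg.2 hab) hδ.le)]
  · rintro ⟨x, u⟩ ⟨hx, hu⟩
    obtain ⟨k, hk, huk⟩ := exists_mem_Icc_add_mul hδ hu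
    exact mem_iUnion.2 ⟨⟨k, hk⟩, hx, huk⟩
  · refine (ediam_prod_le _ _).trans (max_le ht ?_)
    rw [Real.ediam_Icc]
    exact ENNReal.ofReal_le_ofReal (by ring_nf; rfl)

theorem ENNReal.ofReal_max_toReal_rpow_le {a : ℝ≥0∞} (ha : a ≠ ⊤) {c d : ℝ} (hc : 0 ≤ c)
    (hd : 0 ≤ d) : ENNReal.ofReal (max a.toReal c ^ d) ≤ a ^ d + ENNReal.ofReal (c ^ d) := by
  rw [← ENNReal.ofReal_rpow_of_nonneg (le_max_of_le_right hc) hd, ENNReal.ofReal_max,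
    ENNReal.ofReal_toReal ha, ENNReal.max_rpow hd, ← ENNReal.ofReal_rpow_of_nonneg hc hd]
  exact max_le_add_of_nonneg zero_le zero_le

section HausdorffMeasure

variable {X : Type*} [EMetricSpace X] [MeasurableSpace X] [BorelSpace X]

theorem exists_cover_of_hausdorffMeasure_eq_zero {d : ℝ} (hd : 0 < d) {s : Set X}
    (hs : μH[d] s = 0) {r ε : ℝ≥0∞} (hr : 0 < r) (hε : 0 < ε) :
    ∃ t : ℕ → Set X, s ⊆ ⋃ i, t i ∧ (∀ i, ediam (t i) ≤ r) ∧ ∑' i, ediam (t i) ^ d < ε := by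
  have h : (⨅ (t : ℕ → Set X) (_ : s ⊆ ⋃ i, t i) (_ : ∀ i, ediam (t i) ≤ r),
      ∑' i, ⨆ _ : (t i).Nonempty, ediam (t i) ^ d) < ε := by
    refine lt_of_le_of_lt ?_ (hs ▸ hε)
    rw [Measure.hausdorffMeasure_apply]
    exact le_iSup₂_of_le r hr le_rfl
  simp only [iInf_lt_iff] at h
  obtain ⟨t, hst, htr, hsum⟩ := h
  refine ⟨t, hst, htr, lt_of_le_of_lt (ENNReal.tsum_le_tsum fun i => ?_) hsum⟩
  rcases (t i).eq_empty_or_nonempty with h | h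
  · simp [h, ENNReal.zero_rpow_of_pos hd]
  · simp [h]

theorem hausdorffMeasure_eq_zero_of_forall_cover {d : ℝ} {s : Set X}
    (h : ∀ r : ℝ, 0 < r → ∀ ε : ℝ, 0 < ε → ∃ (ι : Type) (_ : Countable ι) (t : ι → Set X),
      s ⊆ ⋃ i, t i ∧ (∀ i, ediam (t i) ≤ ENNReal.ofReal r) ∧
        ∑' i, ediam (t i) ^ d ≤ ENNReal.ofReal ε) :
    μH[d] s = 0 := by
  refine le_antisymm (ENNReal.le_of_forall_pos_le_add fun ε hε _ => ?_) zero_le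
  choose ι hι t hst htr hsum using fun q : ℕ => h ((q : ℝ) + 1)⁻¹ (by positivity) ε hε
  have hr : Tendsto (fun q : ℕ => ENNReal.ofReal ((q : ℝ) + 1)⁻¹) atTop (𝓝 0) := by
    simpa [one_div] using
      ENNReal.tendsto_ofReal (tendsto_one_div_add_atTop_nhds_zero_nat (𝕜 := ℝ))
  calc μH[d] s ≤ liminf (fun q => ∑' i, ediam (t q i) ^ d) atTop :=
        Measure.hausdorffMeasure_le_liminf_tsum d s _ hr t (.of_forall htr) (.of_forall hst)
    _ ≤ liminf (fun _ => ENNReal.ofReal ε) atTop := liminf_le_liminf (.of_forall hsum)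
    _ = 0 + ε := by simp

theorem exists_cover_pos_of_hausdorffMeasure_eq_zero {d : ℝ} (hd : 0 < d) {s : Set X}
    (hs : μH[d] s = 0) {r ε : ℝ} (hr : 0 < r) (hε : 0 < ε) :
    ∃ (t : ℕ → Set X) (δ : ℕ → ℝ), s ⊆ ⋃ i, t i ∧
      (∀ i, 0 < δ i ∧ δ i ≤ r ∧ ediam (t i) ≤ ENNReal.ofReal (δ i)) ∧
      ∑' i, ENNReal.ofReal (δ i ^ d) ≤ ENNReal.ofReal ε := by
  have hε₂ : 0 < ENNReal.ofReal (ε / 2) := ENNReal.ofReal_pos.2 (half_pos hε)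
  obtain ⟨t, hst, htr, hsum⟩ :=
    exists_cover_of_hausdorffMeasure_eq_zero hd hs (ENNReal.ofReal_pos.2 hr) hε₂
  have hdiam : ∀ i, ediam (t i) ≠ ⊤ := fun i => ne_top_of_le_ne_top ENNReal.ofReal_ne_top (htr i)
  obtain ⟨η, hη, hηsum⟩ := ENNReal.exists_pos_sum_of_countable hε₂.ne' ℕ
  -- `c i > 0` pads the possibly degenerate diameter of `t i` at a summable cost
  set c : ℕ → ℝ := fun i => min r ((η i : ℝ) ^ d⁻¹)
  have hc : ∀ i, 0 < c i := fun i => lt_min hr (Real.rpow_pos_of_pos (hη i) _)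
  have hcη : ∀ i, ENNReal.ofReal (c i ^ d) ≤ η i := fun i => by
    rw [← ENNReal.ofReal_coe_nnreal]
    refine ENNReal.ofReal_le_ofReal ?_
    calc c i ^ d ≤ ((η i : ℝ) ^ d⁻¹) ^ d := by gcongr; exact min_le_right _ _
      _ = η i := by rw [← Real.rpow_mul (η i).coe_nonneg, inv_mul_cancel₀ hd.ne', Real.rpow_one]
  refine ⟨t, fun i => max (ediam (t i)).toReal (c i), hst, fun i => ⟨?_, ?_, ?_⟩, ?_⟩
  · exact lt_max_of_lt_right (hc i)
  · exact max_le (ENNReal.toReal_le_of_le_ofReal hr.le (htr i)) (min_le_left _ _)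
  · exact (ENNReal.le_ofReal_iff_toReal_le (hdiam i) (le_max_of_le_right (hc i).le)).2
      (le_max_left _ _)
  · calc ∑' i, ENNReal.ofReal (max (ediam (t i)).toReal (c i) ^ d)
        ≤ ∑' i, (ediam (t i) ^ d + η i) := ENNReal.tsum_le_tsum fun i =>
          (ENNReal.ofReal_max_toReal_rpow_le (hdiam i) (hc i).le hd.le).trans
            (by gcongr; exact hcη i)
      _ = ∑' i, ediam (t i) ^ d + ∑' i, (η i : ℝ≥0∞) := ENNReal.tsum_add
      _ ≤ ENNReal.ofReal (ε / 2) + ENNReal.ofReal (ε / 2) := add_le_add hsum.le hηsum.le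
      _ = ENNReal.ofReal ε := by
          rw [← ENNReal.ofReal_add (by positivity) (by positivity), add_halves]

theorem hausdorffMeasure_prod_Icc_eq_zero {d : ℝ} (hd : 0 < d) {A : Set X} (hA : μH[d] A = 0)
    (a b : ℝ) : μH[d + 1] (A ×ˢ Icc a b) = 0 := by
  rcases lt_or_ge b a with hba | hab
  · simp [Icc_eq_empty_of_lt hba]
  set L := b - a
  have hL : 0 < L + 1 := by linarith [sub_nonneg.2 hab]
  refine hausdorffMeasure_eq_zero_of_forall_cover fun r hr ε hε => ?_
  obtain ⟨t, δ, hAt, hδ, hsum⟩ :=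
    exists_cover_pos_of_hausdorffMeasure_eq_zero hd hA (lt_min hr one_pos) (div_pos hε hL)
  choose N hN box hbox_cover hbox using fun i => exists_boxes_cover_prod_Icc (hδ i).1 (hδ i).2.2 hab
  have hcost : ∀ i, (N i : ℝ) * δ i ^ (d + 1) ≤ (L + 1) * δ i ^ d := fun i => by
    obtain ⟨hδ₀, hδ₁, -⟩ := hδ i
    calc (N i : ℝ) * δ i ^ (d + 1) = N i * δ i * δ i ^ d := by
          rw [Real.rpow_add_one hδ₀.ne']; ring
      _ ≤ (L / δ i + 1) * δ i * δ i ^ d := by gcongr; exact hN i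
      _ = (L + δ i) * δ i ^ d := by field_simp
      _ ≤ (L + 1) * δ i ^ d := by gcongr; exact hδ₁.trans (min_le_right _ _)
  refine ⟨Σ i, Fin (N i), inferInstance, fun p => box p.1 p.2, ?_, fun p => ?_, ?_⟩
  · rintro p ⟨hp₁, hp₂⟩
    obtain ⟨i, hi⟩ := mem_iUnion.1 (hAt hp₁)
    obtain ⟨k, hk⟩ := mem_iUnion.1 (hbox_cover i ⟨hi, hp₂⟩)
    exact mem_iUnion.2 ⟨⟨i, k⟩, hk⟩
  · exact (hbox p.1 p.2).trans (ENNReal.ofReal_le_ofReal ((hδ p.1).2.1.trans (min_le_left _ _)))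
  · calc ∑' p : Σ i, Fin (N i), ediam (box p.1 p.2) ^ (d + 1)
        ≤ ∑' p : Σ i, Fin (N i), ENNReal.ofReal (δ p.1 ^ (d + 1)) :=
          ENNReal.tsum_le_tsum fun p => by
            rw [← ENNReal.ofReal_rpow_of_nonneg (hδ p.1).1.le (by linarith)]
            gcongr
            exact hbox p.1 p.2
      _ = ∑' i, ENNReal.ofReal (N i * δ i ^ (d + 1)) := by
          rw [ENNReal.tsum_sigma']
          refine tsum_congr fun i => ?_
          simp only [tsum_fintype, Finset.sum_const, Finset.card_univ, Fintype.card_fin,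
            nsmul_eq_mul]
          rw [ENNReal.ofReal_mul (Nat.cast_nonneg _), ENNReal.ofReal_natCast]
      _ ≤ ∑' i, ENNReal.ofReal (L + 1) * ENNReal.ofReal (δ i ^ d) :=
        ENNReal.tsum_le_tsum fun i => by
          rw [← ENNReal.ofReal_mul hL.le]
          exact ENNReal.ofReal_le_ofReal (hcost i)
      _ ≤ ENNReal.ofReal (L + 1) * ENNReal.ofReal (ε / (L + 1)) := by
          rw [ENNReal.tsum_mul_left]; gcongr
      _ = ENNReal.ofReal ε := by
          rw [← ENNReal.ofReal_mul hL.le, mul_div_cancel₀ _ hL.ne']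

theorem hausdorffMeasure_prod_eq_zero {d : ℝ} (hd : 0 < d) {A : Set X} (hA : μH[d] A = 0)
    (s : Set ℝ) : μH[d + 1] (A ×ˢ s) = 0 := by
  have hcover : A ×ˢ s ⊆ ⋃ m : ℕ, A ×ˢ Icc (-(m : ℝ)) m := fun p hp =>
    mem_iUnion.2 ⟨⌈|p.2|⌉₊, hp.1, abs_le.1 (Nat.le_ceil _)⟩
  exact measure_mono_null hcover
    (measure_iUnion_null fun m => hausdorffMeasure_prod_Icc_eq_zero hd hA _ _)

theorem LocallyLipschitz.hausdorffMeasure_image_eq_zero [SecondCountableTopology X]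
    {Y : Type*} [EMetricSpace Y] [MeasurableSpace Y] [BorelSpace Y] {f : X → Y}
    (hf : LocallyLipschitz f) {d : ℝ} (hd : 0 ≤ d) {s : Set X} (hs : μH[d] s = 0) :
    μH[d] (f '' s) = 0 := by
  choose K t ht hK using hf
  obtain ⟨S, hSc, hSU⟩ := TopologicalSpace.countable_cover_nhds ht
  have hcover : f '' s ⊆ ⋃ x ∈ S, f '' (s ∩ t x) := by
    rintro _ ⟨y, hy, rfl⟩
    obtain ⟨x, hx, hyx⟩ := mem_iUnion₂.1 (hSU.symm ▸ mem_univ y)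
    exact mem_iUnion₂.2 ⟨x, hx, y, ⟨hy, hyx⟩, rfl⟩
  refine measure_mono_null hcover ((measure_biUnion_null_iff hSc).2 fun x _ => ?_)
  have hKx := ((hK x).mono (inter_subset_right (s := s))).hausdorffMeasure_image_le hd
  rwa [measure_mono_null inter_subset_left hs, mul_zero, nonpos_iff_eq_zero] at hKx

end HausdorffMeasure

def shadow {E : Type*} [AddCommGroup E] [Module ℝ E] (x : E) (F : Set E) : Set E :=
  {z | (segment ℝ x z ∩ F).Nonempty}

section Shadow

variable {E : Type*} [AddCommGroup E] [Module ℝ E]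

theorem shadow_subset_image_prod {x : E} {F : Set E} (hx : x ∉ F) :
    shadow x F ⊆ (fun p : E × ℝ => x + p.2 • (p.1 - x)) '' (F ×ˢ univ) := by
  rintro z ⟨p, hp, hpF⟩
  rw [segment_eq_image'] at hp
  obtain ⟨θ, -, rfl⟩ := hp
  have hθ : θ ≠ 0 := by rintro rfl; simp_all
  exact ⟨(x + θ • (z - x), θ⁻¹), ⟨hpF, mem_univ _⟩, by simp [smul_smul, inv_mul_cancel₀ hθ]⟩

theorem joinedIn_compl_of_notMem_shadow [TopologicalSpace E] [ContinuousAdd E]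
    [ContinuousSMul ℝ E] {x z : E} {F : Set E} (hz : z ∉ shadow x F) : JoinedIn Fᶜ x z :=
  JoinedIn.of_segment_subset fun p hp hpF => hz ⟨p, hp, hpF⟩

theorem isPathConnected_compl_of_measure_shadow_eq_zero [TopologicalSpace E] [ContinuousAdd E]
    [ContinuousSMul ℝ E] [MeasurableSpace E] {μ : Measure E} [NeZero μ] {F : Set E}
    (hF : μ F = 0) (hshadow : ∀ x ∉ F, μ (shadow x F) = 0) : IsPathConnected Fᶜ := by
  have exists_notMem : ∀ {N : Set E}, μ N = 0 → ∃ z, z ∉ N := fun hN =>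
    (measure_eq_zero_iff_ae_notMem.1 hN).exists
  obtain ⟨x, hx⟩ := exists_notMem hF
  refine ⟨x, hx, fun y hy => ?_⟩
  obtain ⟨z, hz⟩ := exists_notMem (measure_union_null (hshadow x hx) (hshadow y hy))
  rw [mem_union, not_or] at hz
  exact (joinedIn_compl_of_notMem_shadow hz.1).trans (joinedIn_compl_of_notMem_shadow hz.2).symm

theorem hausdorffMeasure_shadow_eq_zero {E : Type*} [NormedAddCommGroup E] [NormedSpace ℝ E]
    [MeasurableSpace E] [BorelSpace E] [SecondCountableTopology E] {d : ℝ} (hd : 0 < d)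
    {F : Set E} (hF : μH[d] F = 0) {x : E} (hx : x ∉ F) : μH[d + 1] (shadow x F) = 0 := by
  have hφ : ContDiff ℝ 1 fun p : E × ℝ => x + p.2 • (p.1 - x) := by fun_prop
  exact measure_mono_null (shadow_subset_image_prod hx)
    (hφ.locallyLipschitz.hausdorffMeasure_image_eq_zero (by positivity)
      (hausdorffMeasure_prod_eq_zero hd hF univ))

end Shadow

theorem complement_pathConnected_of_hausdorffMeasure_zero_general (n : ℕ) (hn : 3 ≤ n)
    (F : Set (EuclideanSpace ℝ (Fin n)))
    (hmeas : μH[((n : ℝ) - 1)] F = 0) :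
    IsPathConnected Fᶜ := by
  have hd : 0 < (n : ℝ) - 1 := by
    have : (3 : ℝ) ≤ n := by exact_mod_cast hn
    linarith
  refine isPathConnected_compl_of_measure_shadow_eq_zero (μ := μH[(n : ℝ)]) ?_ fun x hx => ?_
  · exact nonpos_iff_eq_zero.1 (hmeas ▸ Measure.hausdorffMeasure_mono (by linarith) F)
  · simpa using hausdorffMeasure_shadow_eq_zero hd hmeas hx

theorem complement_pathConnected_of_hausdorffMeasure_zero (n : ℕ) (hn : 3 ≤ n)
    (F : Set (EuclideanSpace ℝ (Fin n))) (hF : IsClosed F)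
    (hmeas : μH[((n : ℝ) - 1)] F = 0) :
    IsPathConnected Fᶜ :=
  complement_pathConnected_of_hausdorffMeasure_zero_general n hn F hmeas
end

section
/- Let Γ, F ⊆ ℝ^n be compact disjoint sets with dimB̄(Γ) + dimH(F) < n − 1. Then there exists a unit vector v ∈ S^{n−1} such that for all x ∈ Γ, y ∈ F, and t ∈ ℝ, y ≠ x + t·v; that is, the union of all lines through points of Γ in direction v misses F. -/
open MeasureTheory Filter

/-- Minimal number of `ε`-balls needed to cover `A` (junk value `0` if no finite cover exists). -/
noncomputable def coverNum {X : Type*} [MetricSpace X] (A : Set X) (ε : ℝ) : ℕ :=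
  sInf {k : ℕ | ∃ t : Finset X, t.card = k ∧ A ⊆ ⋃ x ∈ t, Metric.ball x ε}

/-- Upper box-counting (limit capacity) dimension of a set. -/
noncomputable def dimBUpper {X : Type*} [MetricSpace X] (A : Set X) : ℝ :=
  limsup (fun ε : ℝ => Real.log (coverNum A ε) / (-Real.log ε)) (nhdsWithin 0 (Set.Ioi 0))

/-!
If every direction were hit, every `z ≠ 0` in a ball of radius `δ = dist Γ F > 0` would be of the
form `c • (y - x)` with `|c| ≤ 1`, `x ∈ Γ`, `y ∈ F`; so the smooth image of `[-1, 1] × Γ × F` would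
contain a punctured ball and have Hausdorff dimension `n`. But
`dimH (A × B) ≤ dimB̄ A + dimH B`, so that image has dimension at most
`1 + dimB̄ Γ + dimH F < n`. The product bound comes from covering `A × Uₖ`, for a cover `(Uₖ)` of
`B` that is cheap for `μH[t]`, by `ρₖ ^ (-s)` sets of diameter `2ρₖ`, where `ρₖ ≈ diam Uₖ`.
-/

open Set Metric Bornology Module Topology
open scoped ENNReal NNReal

def CoverableWithExponent {X : Type*} [PseudoMetricSpace X] (A : Set X) (s : ℝ) : Prop :=
  ∀ᶠ ε in 𝓝[>] (0 : ℝ), ∃ T : Finset X, A ⊆ ⋃ x ∈ T, ball x ε ∧ (T.card : ℝ) ≤ ε ^ (-s)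

section FiniteDimensional

variable {E : Type*} [NormedAddCommGroup E] [NormedSpace ℝ E] [FiniteDimensional ℝ E]

theorem card_le_of_pairwise_le_dist {T : Finset E} {R ε : ℝ} (hR : 0 ≤ R) (hε : 0 < ε)
    (hTR : ∀ x ∈ T, ‖x‖ ≤ R) (hT : (T : Set E).Pairwise fun x y => ε ≤ dist x y) :
    (T.card : ℝ) ≤ (2 * R / ε + 1) ^ finrank ℝ E := by
  borelize E
  let μ : Measure E := Measure.addHaar
  have hε2 : 0 < ε / 2 := half_pos hε
  have hdisj : (T : Set E).PairwiseDisjoint fun x => ball x (ε / 2) :=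
    fun x hx y hy hxy => ball_disjoint_ball (by linarith [hT hx hy hxy])
  have hsub : ⋃ x ∈ T, ball x (ε / 2) ⊆ ball 0 (R + ε / 2) :=
    iUnion₂_subset fun x hx => ball_subset_ball' (by rw [dist_zero_right]; linarith [hTR x hx])
  have hvol : (T.card : ℝ≥0∞) * ENNReal.ofReal ((ε / 2) ^ finrank ℝ E) * μ (ball 0 1) ≤
      ENNReal.ofReal ((R + ε / 2) ^ finrank ℝ E) * μ (ball 0 1) :=
    calc (T.card : ℝ≥0∞) * ENNReal.ofReal ((ε / 2) ^ finrank ℝ E) * μ (ball 0 1)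
        = μ (⋃ x ∈ T, ball x (ε / 2)) := by
          rw [measure_biUnion_finset hdisj fun _ _ => measurableSet_ball]
          simp only [μ.addHaar_ball_of_pos _ hε2, Finset.sum_const, nsmul_eq_mul, mul_assoc]
      _ ≤ μ (ball 0 (R + ε / 2)) := measure_mono hsub
      _ = ENNReal.ofReal ((R + ε / 2) ^ finrank ℝ E) * μ (ball 0 1) :=
          μ.addHaar_ball_of_pos _ (by linarith)
  have hvol' := (ENNReal.mul_le_mul_iff_left (measure_ball_pos μ _ one_pos).ne'
    measure_ball_lt_top.ne).1 hvol
  rw [← ENNReal.ofReal_natCast, ← ENNReal.ofReal_mul (by positivity),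
    ENNReal.ofReal_le_ofReal_iff (by positivity)] at hvol'
  calc (T.card : ℝ) = T.card * (ε / 2) ^ finrank ℝ E / (ε / 2) ^ finrank ℝ E := by field_simp
    _ ≤ (R + ε / 2) ^ finrank ℝ E / (ε / 2) ^ finrank ℝ E := by gcongr
    _ = (2 * R / ε + 1) ^ finrank ℝ E := by rw [← div_pow]; congr 1; field_simp

theorem exists_finset_cover_card_le {A : Set E} {R ε : ℝ} (hR : 0 ≤ R) (hε : 0 < ε)
    (hA : A ⊆ closedBall 0 R) :
    ∃ T : Finset E, A ⊆ ⋃ x ∈ T, ball x ε ∧ (T.card : ℝ) ≤ (2 * R / ε + 1) ^ finrank ℝ E := by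
  classical
  -- An `ε`-separated subset of `A` of maximal cardinality is an `ε`-cover of `A`.
  let S : Set ℕ := {k | ∃ T : Finset E, ↑T ⊆ A ∧
    (T : Set E).Pairwise (fun x y => ε ≤ dist x y) ∧ T.card = k}
  have hcard : ∀ k ∈ S, (k : ℝ) ≤ (2 * R / ε + 1) ^ finrank ℝ E := by
    rintro _ ⟨T, hTA, hT, rfl⟩
    exact card_le_of_pairwise_le_dist hR hε
      (fun x hx => mem_closedBall_zero_iff.1 (hA (hTA hx))) hT
  have hS : BddAbove S := ⟨_, fun k hk => Nat.le_floor (hcard k hk)⟩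
  obtain ⟨T, hTA, hT, hTS⟩ : sSup S ∈ S := Nat.sSup_mem ⟨0, ∅, by simp⟩ hS
  refine ⟨T, fun a ha => ?_, hTS ▸ hcard _ ⟨T, hTA, hT, hTS⟩⟩
  by_contra hfar
  simp only [mem_iUnion, mem_ball, not_exists, not_lt] at hfar
  have haT : a ∉ T := fun haT => (hfar a haT).not_gt (by simpa using hε)
  have hinsert : (insert a T).card ∈ S := by
    refine ⟨insert a T, ?_, ?_, rfl⟩ <;> push_cast
    · exact insert_subset ha hTA
    · exact hT.insert fun x hx _ => ⟨hfar x hx, dist_comm a x ▸ hfar x hx⟩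
  have := le_csSup hS hinsert
  rw [Finset.card_insert_of_notMem haT, hTS] at this
  omega

theorem Bornology.IsBounded.coverableWithExponent {A : Set E} (hA : IsBounded A) {s : ℝ}
    (hs : finrank ℝ E < s) : CoverableWithExponent A s := by
  obtain ⟨R, hR, hAR⟩ := hA.subset_closedBall_lt 0 0
  set d := finrank ℝ E
  have hlarge : ∀ᶠ ε in 𝓝[>] (0 : ℝ), (2 * R + 1) ^ d ≤ ε ^ ((d : ℝ) - s) :=
    (tendsto_rpow_neg_nhdsGT_zero (by linarith)).eventually_ge_atTop _
  filter_upwards [hlarge, Ioo_mem_nhdsGT one_pos] with ε hε ⟨hε0, hε1⟩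
  obtain ⟨T, hcov, hcard⟩ := exists_finset_cover_card_le hR.le hε0 hAR
  refine ⟨T, hcov, hcard.trans ?_⟩
  calc (2 * R / ε + 1) ^ d ≤ ((2 * R + 1) / ε) ^ d := by
        rw [add_div]
        gcongr
        exact one_le_one_div hε0 hε1.le
    _ = (2 * R + 1) ^ d * ε ^ (-(d : ℝ)) := by
        rw [div_pow, Real.rpow_neg hε0.le, Real.rpow_natCast, div_eq_mul_inv]
    _ ≤ ε ^ ((d : ℝ) - s) * ε ^ (-(d : ℝ)) := by gcongr
    _ = ε ^ (-s) := by rw [← Real.rpow_add hε0]; ring_nf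

end FiniteDimensional

section BoxDimension

variable {X : Type*} [MetricSpace X] {A : Set X} {s : ℝ}

theorem CoverableWithExponent.mono {t : ℝ} (h : CoverableWithExponent A s) (hst : s ≤ t) :
    CoverableWithExponent A t := by
  filter_upwards [h, Ioo_mem_nhdsGT one_pos] with ε ⟨T, hcov, hcard⟩ ⟨hε0, hε1⟩
  exact ⟨T, hcov, hcard.trans (Real.rpow_le_rpow_of_exponent_ge hε0 hε1.le (neg_le_neg hst))⟩

theorem coverNum_le_card {ε : ℝ} {T : Finset X} (h : A ⊆ ⋃ x ∈ T, ball x ε) :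
    coverNum A ε ≤ T.card :=
  Nat.sInf_le ⟨T, rfl, h⟩

theorem exists_finset_card_eq_coverNum {ε : ℝ} (h : ∃ T : Finset X, A ⊆ ⋃ x ∈ T, ball x ε) :
    ∃ T : Finset X, T.card = coverNum A ε ∧ A ⊆ ⋃ x ∈ T, ball x ε := by
  obtain ⟨T, hT⟩ := h
  exact Nat.sInf_mem (s := {k | ∃ T : Finset X, T.card = k ∧ A ⊆ ⋃ x ∈ T, ball x ε})
    ⟨T.card, T, rfl, hT⟩

theorem log_div_neg_log_le_of_le_rpow {N : ℕ} {ε : ℝ} (hs : 0 ≤ s) (hε0 : 0 < ε) (hε1 : ε < 1)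
    (h : (N : ℝ) ≤ ε ^ (-s)) : Real.log N / -Real.log ε ≤ s := by
  have hlog : 0 < -Real.log ε := neg_pos.2 (Real.log_neg hε0 hε1)
  rw [div_le_iff₀ hlog]
  rcases N.eq_zero_or_pos with rfl | hN
  · simpa using mul_nonneg hs hlog.le
  · calc Real.log N ≤ Real.log (ε ^ (-s)) := Real.log_le_log (by exact_mod_cast hN) h
      _ = s * -Real.log ε := by rw [Real.log_rpow hε0]; ring

theorem le_rpow_of_log_div_neg_log_le {N : ℕ} {ε : ℝ} (hε0 : 0 < ε) (hε1 : ε < 1)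
    (h : Real.log N / -Real.log ε ≤ s) : (N : ℝ) ≤ ε ^ (-s) := by
  rcases N.eq_zero_or_pos with rfl | hN
  · simpa using (Real.rpow_pos_of_pos hε0 _).le
  rw [div_le_iff₀ (neg_pos.2 (Real.log_neg hε0 hε1))] at h
  rw [← Real.log_le_log_iff (by exact_mod_cast hN) (Real.rpow_pos_of_pos hε0 _),
    Real.log_rpow hε0]
  linarith

theorem CoverableWithExponent.isBoundedUnder_log_coverNum (h : CoverableWithExponent A s) :
    IsBoundedUnder (· ≤ ·) (𝓝[>] 0) fun ε => Real.log (coverNum A ε) / -Real.log ε := by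
  refine isBoundedUnder_of_eventually_le (a := max s 0) ?_
  filter_upwards [h.mono (le_max_left s 0), Ioo_mem_nhdsGT one_pos]
    with ε ⟨T, hcov, hcard⟩ ⟨hε0, hε1⟩
  exact log_div_neg_log_le_of_le_rpow (le_max_right s 0) hε0 hε1
    ((Nat.cast_le.2 (coverNum_le_card hcov)).trans hcard)

theorem CoverableWithExponent.of_dimBUpper_lt {s₀ : ℝ} (h : CoverableWithExponent A s₀)
    (hs : dimBUpper A < s) : CoverableWithExponent A s := by
  filter_upwards [eventually_lt_of_limsup_lt hs h.isBoundedUnder_log_coverNum, h,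
    Ioo_mem_nhdsGT one_pos] with ε hlt ⟨T, hcov, _⟩ ⟨hε0, hε1⟩
  obtain ⟨T', hcard, hcov'⟩ := exists_finset_card_eq_coverNum ⟨T, hcov⟩
  exact ⟨T', hcov', hcard ▸ le_rpow_of_log_div_neg_log_le hε0 hε1 hlt.le⟩

end BoxDimension

section Product

variable {X Y : Type*} [MetricSpace X] [EMetricSpace Y] {A : Set X} {B : Set Y}

theorem exists_cover_tsum_ediam_rpow_lt [MeasurableSpace Y] [BorelSpace Y] {t : ℝ}
    (ht : 0 < t) (hB : μH[t] B = 0) {r γ : ℝ≥0∞} (hr : 0 < r) (hγ : 0 < γ) :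
    ∃ U : ℕ → Set Y, B ⊆ ⋃ k, U k ∧ (∀ k, ediam (U k) ≤ r) ∧ ∑' k, ediam (U k) ^ t < γ := by
  have h : (⨅ (U : ℕ → Set Y) (_ : B ⊆ ⋃ k, U k) (_ : ∀ k, ediam (U k) ≤ r),
      ∑' k, ⨆ _ : (U k).Nonempty, ediam (U k) ^ t) < γ := by
    refine lt_of_le_of_lt ?_ hγ
    rw [← hB, Measure.hausdorffMeasure_apply]
    exact le_iSup₂ (f := fun r (_ : 0 < r) => ⨅ (U : ℕ → Set Y) (_ : B ⊆ ⋃ k, U k)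
      (_ : ∀ k, ediam (U k) ≤ r), ∑' k, ⨆ _ : (U k).Nonempty, ediam (U k) ^ t) r hr
  simp only [iInf_lt_iff] at h
  obtain ⟨U, hcov, hdiam, hsum⟩ := h
  refine ⟨U, hcov, hdiam, lt_of_le_of_lt (ENNReal.tsum_le_tsum fun k => ?_) hsum⟩
  rcases (U k).eq_empty_or_nonempty with he | hne
  · simp [he, ENNReal.zero_rpow_of_pos ht]
  · exact le_iSup_of_le hne le_rfl

theorem exists_pos_le_rpow_le_add {d : ℝ≥0∞} {δ t : ℝ} (hδ : 0 < δ) (hd : d ≤ ENNReal.ofReal δ)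
    (ht : 0 < t) {η : ℝ≥0∞} (hη : 0 < η) :
    ∃ ρ : ℝ, 0 < ρ ∧ ρ ≤ δ ∧ d ≤ ENNReal.ofReal ρ ∧ ENNReal.ofReal ρ ^ t ≤ d ^ t + η := by
  have hsmall : ∀ᶠ ρ in 𝓝[>] (0 : ℝ), ENNReal.ofReal ρ ^ t < η := by
    have hcont : Continuous fun ρ : ℝ => ENNReal.ofReal ρ ^ t :=
      (ENNReal.continuous_rpow_const).comp ENNReal.continuous_ofReal
    refine nhdsWithin_le_nhds (hcont.tendsto' 0 0 ?_ |>.eventually (gt_mem_nhds hη))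
    simp [ENNReal.zero_rpow_of_pos ht]
  obtain ⟨η₀, hη₀, hη₀pos, hη₀δ⟩ := (hsmall.and (Ioc_mem_nhdsGT hδ)).exists
  have hd_top : d ≠ ⊤ := ne_top_of_le_ne_top ENNReal.ofReal_ne_top hd
  refine ⟨max d.toReal η₀, lt_max_of_lt_right hη₀pos,
    max_le (ENNReal.toReal_le_of_le_ofReal hδ.le hd) hη₀δ, ?_, ?_⟩ <;>
    rw [ENNReal.ofReal_max, ENNReal.ofReal_toReal hd_top]
  · exact le_max_left _ _
  · rcases max_cases d (ENNReal.ofReal η₀) with ⟨hmax, _⟩ | ⟨hmax, _⟩ <;> rw [hmax]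
    · exact le_self_add
    · exact le_add_left hη₀.le

theorem ediam_ball_prod_le {U : Set Y} {x : X} {ρ : ℝ} (hρ : 0 < ρ)
    (hU : ediam U ≤ ENNReal.ofReal ρ) : ediam (ball x ρ ×ˢ U) ≤ ENNReal.ofReal (2 * ρ) := by
  refine ediam_le fun p hp q hq => ?_
  rw [Prod.edist_eq]
  refine max_le ?_ ((edist_le_ediam_of_mem hp.2 hq.2).trans
    (hU.trans (ENNReal.ofReal_le_ofReal (by linarith))))
  rw [edist_dist]
  exact ENNReal.ofReal_le_ofReal ((dist_triangle_right _ _ x).trans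
    (by linarith [mem_ball.1 hp.1, mem_ball.1 hq.1]))

theorem sum_ediam_ball_prod_rpow_le {T : Finset X} {U : Set Y} {ρ s t : ℝ} (hρ : 0 < ρ)
    (hs : 0 ≤ s) (ht : 0 < t) (hT : (T.card : ℝ) ≤ ρ ^ (-s)) (hU : ediam U ≤ ENNReal.ofReal ρ) :
    ∑ x ∈ T, ediam (ball x ρ ×ˢ U) ^ (s + t) ≤ 2 ^ (s + t) * ENNReal.ofReal ρ ^ t := by
  have hρ0 : ENNReal.ofReal ρ ≠ 0 := (ENNReal.ofReal_pos.2 hρ).ne'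
  calc ∑ x ∈ T, ediam (ball x ρ ×ˢ U) ^ (s + t)
      ≤ ∑ _x ∈ T, ENNReal.ofReal (2 * ρ) ^ (s + t) :=
        Finset.sum_le_sum fun x _ => ENNReal.rpow_le_rpow (ediam_ball_prod_le hρ hU) (by linarith)
    _ = T.card * (2 ^ (s + t) * ENNReal.ofReal ρ ^ (s + t)) := by
        rw [Finset.sum_const, nsmul_eq_mul, ENNReal.ofReal_mul zero_le_two,
          ENNReal.mul_rpow_of_nonneg _ _ (by linarith)]
        simp
    _ ≤ ENNReal.ofReal ρ ^ (-s) * (2 ^ (s + t) * ENNReal.ofReal ρ ^ (s + t)) := by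
        gcongr
        rw [ENNReal.ofReal_rpow_of_pos hρ, ← ENNReal.ofReal_natCast]
        exact ENNReal.ofReal_le_ofReal hT
    _ = 2 ^ (s + t) * ENNReal.ofReal ρ ^ t := by
        rw [mul_left_comm, ← ENNReal.rpow_add _ _ hρ0 ENNReal.ofReal_ne_top, neg_add_cancel_left]

theorem exists_prod_cover_tsum_ediam_rpow_le [MeasurableSpace Y] [BorelSpace Y] {s t ε₀ δ : ℝ}
    (hs : 0 ≤ s) (ht : 0 < t)
    (hA : ∀ ρ ∈ Ioo 0 ε₀, ∃ T : Finset X, A ⊆ ⋃ x ∈ T, ball x ρ ∧ (T.card : ℝ) ≤ ρ ^ (-s))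
    (hB : μH[t] B = 0) (hδ : 0 < δ) (hδε₀ : δ < ε₀) :
    ∃ (T : ℕ → Finset X) (W : (Σ k, T k) → Set (X × Y)), A ×ˢ B ⊆ ⋃ i, W i ∧
      (∀ i, ediam (W i) ≤ ENNReal.ofReal (2 * δ)) ∧
      ∑' i, ediam (W i) ^ (s + t) ≤ 2 ^ (s + t) * (2 * ENNReal.ofReal δ) := by
  have hδ' : 0 < ENNReal.ofReal δ := ENNReal.ofReal_pos.2 hδ
  obtain ⟨U, hBU, hUdiam, hUsum⟩ := exists_cover_tsum_ediam_rpow_lt ht hB hδ' hδ'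
  obtain ⟨η, hη, hηsum⟩ := ENNReal.exists_pos_sum_of_countable' hδ'.ne' ℕ
  -- `ρ k` is `diam (U k)` made positive, at a summable extra cost `η k`.
  choose ρ hρ hρδ hUρ hρt using fun k => exists_pos_le_rpow_le_add hδ (hUdiam k) ht (hη k)
  choose T hTA hTcard using fun k => hA (ρ k) ⟨hρ k, (hρδ k).trans_lt hδε₀⟩
  refine ⟨T, fun i => ball (i.2 : X) (ρ i.1) ×ˢ U i.1, ?_, fun i => ?_, ?_⟩
  · rintro ⟨a, b⟩ ⟨ha, hb⟩
    obtain ⟨k, hk⟩ := mem_iUnion.1 (hBU hb)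
    obtain ⟨x, hx, hax⟩ := mem_iUnion₂.1 (hTA k ha)
    exact mem_iUnion.2 ⟨⟨k, x, hx⟩, hax, hk⟩
  · exact (ediam_ball_prod_le (hρ i.1) (hUρ i.1)).trans
      (ENNReal.ofReal_le_ofReal (by linarith [hρδ i.1]))
  · calc ∑' i : Σ k, T k, ediam (ball (i.2 : X) (ρ i.1) ×ˢ U i.1) ^ (s + t)
        = ∑' k, ∑ x ∈ T k, ediam (ball x (ρ k) ×ˢ U k) ^ (s + t) := by
          rw [ENNReal.tsum_sigma']
          exact tsum_congr fun k =>
            Finset.tsum_subtype (T k) fun x => ediam (ball x (ρ k) ×ˢ U k) ^ (s + t)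
      _ ≤ ∑' k, 2 ^ (s + t) * (ediam (U k) ^ t + η k) := ENNReal.tsum_le_tsum fun k =>
          (sum_ediam_ball_prod_rpow_le (hρ k) hs ht (hTcard k) (hUρ k)).trans
            (by gcongr; exact hρt k)
      _ = 2 ^ (s + t) * (∑' k, ediam (U k) ^ t + ∑' k, η k) := by
          rw [ENNReal.tsum_mul_left, ENNReal.tsum_add]
      _ ≤ 2 ^ (s + t) * (2 * ENNReal.ofReal δ) := by
          rw [two_mul]
          gcongr

theorem hausdorffMeasure_prod_eq_zero_s14 [MeasurableSpace Y] [BorelSpace Y]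
    [MeasurableSpace (X × Y)] [BorelSpace (X × Y)] {s t : ℝ}
    (hA : CoverableWithExponent A s) (hs : 0 ≤ s) (ht : 0 < t) (hB : μH[t] B = 0) :
    μH[s + t] (A ×ˢ B) = 0 := by
  obtain ⟨ε₀, hε₀, hA⟩ := mem_nhdsGT_iff_exists_Ioo_subset.1 hA
  have hε₀ : 0 < ε₀ := hε₀
  have hδ : ∀ n : ℕ, 0 < ε₀ / (n + 2) := fun n => by positivity
  have hδε₀ : ∀ n : ℕ, ε₀ / (n + 2) < ε₀ := fun n =>
    div_lt_self hε₀ (by linarith [(n.cast_nonneg : (0 : ℝ) ≤ n)])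
  have hδlim : Tendsto (fun n : ℕ => ENNReal.ofReal (ε₀ / (n + 2))) atTop (𝓝 0) := by
    simpa using ENNReal.tendsto_ofReal (tendsto_const_nhds.div_atTop
      (tendsto_atTop_add_const_right _ 2 tendsto_natCast_atTop_atTop))
  choose T W hcov hdiam hsum using fun n =>
    exists_prod_cover_tsum_ediam_rpow_le hs ht hA hB (hδ n) (hδε₀ n)
  refine le_antisymm ?_ bot_le
  calc μH[s + t] (A ×ˢ B) ≤ liminf (fun n => ∑' i, ediam (W n i) ^ (s + t)) atTop :=
        Measure.hausdorffMeasure_le_liminf_tsum _ _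
          (fun n : ℕ => ENNReal.ofReal (2 * (ε₀ / (n + 2))))
          (by simpa [ENNReal.ofReal_mul] using
            ENNReal.Tendsto.const_mul hδlim (Or.inr ENNReal.ofNat_ne_top))
          W (Eventually.of_forall hdiam) (Eventually.of_forall hcov)
    _ ≤ liminf (fun n : ℕ => 2 ^ (s + t) * (2 * ENNReal.ofReal (ε₀ / (n + 2)))) atTop :=
        liminf_le_liminf (Eventually.of_forall hsum)
    _ = 0 := by
        refine Tendsto.liminf_eq ?_
        simpa using ENNReal.Tendsto.const_mul
          (ENNReal.Tendsto.const_mul hδlim (Or.inr ENNReal.ofNat_ne_top))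
          (Or.inr (ENNReal.rpow_ne_top_of_nonneg (by linarith) ENNReal.ofNat_ne_top))

theorem dimH_prod_le_add {a : ℝ≥0}
    (hA : ∀ s : ℝ≥0, a < s → CoverableWithExponent A s) :
    dimH (A ×ˢ B) ≤ a + dimH B := by
  borelize Y (X × Y)
  refine le_of_forall_gt fun c hc => ?_
  obtain ⟨t, hBt, htc⟩ := ENNReal.lt_iff_exists_nnreal_btwn.1 (lt_tsub_iff_left.2 hc)
  obtain ⟨s, has, hsc⟩ :=
    ENNReal.lt_iff_exists_nnreal_btwn.1 (lt_tsub_iff_right.2 (lt_tsub_iff_left.1 htc))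
  have ht : 0 < (t : ℝ) := NNReal.coe_pos.2 (ENNReal.coe_pos.1 (bot_le.trans_lt hBt))
  have hμ := hausdorffMeasure_prod_eq_zero_s14 (hA s (ENNReal.coe_lt_coe.1 has)) s.2 ht
    (hausdorffMeasure_of_dimH_lt hBt)
  calc dimH (A ×ˢ B) ≤ ((s + t : ℝ≥0) : ℝ≥0∞) :=
        dimH_le_of_hausdorffMeasure_ne_top (by push_cast; simp [hμ])
    _ < c := by push_cast; exact lt_tsub_iff_right.1 hsc

theorem Bornology.IsBounded.dimH_prod_le_dimBUpper_add {E : Type*} [NormedAddCommGroup E]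
    [NormedSpace ℝ E] [FiniteDimensional ℝ E] {A : Set E} (hA : IsBounded A) (B : Set Y) :
    dimH (A ×ˢ B) ≤ ENNReal.ofReal (dimBUpper A) + dimH B :=
  dimH_prod_le_add fun _ hs => (hA.coverableWithExponent (lt_add_one _)).of_dimBUpper_lt
    ((Real.le_coe_toNNReal _).trans_lt hs)

theorem Bornology.IsBounded.dimH_prod_le_finrank_add {E : Type*} [NormedAddCommGroup E]
    [NormedSpace ℝ E] [FiniteDimensional ℝ E] {A : Set E} (hA : IsBounded A) (B : Set Y) :
    dimH (A ×ˢ B) ≤ finrank ℝ E + dimH B := by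
  simpa using dimH_prod_le_add (a := finrank ℝ E) fun s hs => hA.coverableWithExponent
    (by exact_mod_cast hs)

end Product

section Directions

variable {E : Type*} [NormedAddCommGroup E] [NormedSpace ℝ E]

theorem exists_mem_Icc_smul_sub_eq {x y z : E} {τ : ℝ} (hz : ‖z‖ ≤ ‖y - x‖)
    (hyx : y = x + τ • (‖z‖⁻¹ • z)) :
    ∃ c ∈ Icc (-1 : ℝ) 1, c • (y - x) = z := by
  rcases eq_or_ne z 0 with rfl | hz0
  · exact ⟨0, by norm_num, zero_smul _ _⟩
  have hz0' : ‖z‖ ≠ 0 := norm_ne_zero_iff.2 hz0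
  have hyx' : y - x = τ • (‖z‖⁻¹ • z) := by rw [hyx, add_sub_cancel_left]
  have hτ : ‖y - x‖ = |τ| := by
    rw [hyx', norm_smul, norm_smul, norm_inv, norm_norm, inv_mul_cancel₀ hz0', mul_one,
      Real.norm_eq_abs]
  have hτ0 : τ ≠ 0 := by
    rintro rfl
    simp only [abs_zero] at hτ
    exact hz0' (le_antisymm (hτ ▸ hz) (norm_nonneg z))
  refine ⟨‖z‖ / τ, abs_le.1 ?_, ?_⟩
  · rw [abs_div, abs_norm, ← hτ]
    exact div_le_one_of_le₀ hz (norm_nonneg _)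
  · rw [hyx', smul_smul, smul_smul, div_mul_cancel₀ _ hτ0, mul_inv_cancel₀ hz0', one_smul]

theorem exists_direction_avoiding_of_dimH_lt [FiniteDimensional ℝ E] [Nontrivial E]
    {Γ F : Set E} (hΓ : IsCompact Γ) (hF : IsClosed F) (hdisj : Disjoint Γ F)
    (hdim : dimH (Icc (-1 : ℝ) 1 ×ˢ (Γ ×ˢ F)) < finrank ℝ E) :
    ∃ v : E, ‖v‖ = 1 ∧ ∀ x ∈ Γ, ∀ y ∈ F, ∀ t : ℝ, y ≠ x + t • v := by
  have hdense := (show ContDiff ℝ 1 fun p : ℝ × E × E => p.1 • (p.2.2 - p.2.1) by fun_prop)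
    |>.contDiffOn.dense_compl_image_of_dimH_lt_finrank convex_univ (subset_univ _) hdim
  obtain ⟨δ, hδ, hsep⟩ := Metric.exists_pos_forall_lt_edist hΓ hF hdisj
  obtain ⟨z, hzδ, hz, hz0⟩ := (hdense.sdiff_singleton 0).inter_open_nonempty _ isOpen_ball
    ⟨0, mem_ball_self hδ⟩
  refine ⟨‖z‖⁻¹ • z, norm_smul_inv_norm hz0, fun x hx y hy t hyx => hz ?_⟩
  have hzyx : ‖z‖ ≤ ‖y - x‖ := by
    rw [← dist_eq_norm, dist_comm, ← coe_nndist]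
    exact (mem_ball_zero_iff.1 hzδ).le.trans
      (NNReal.coe_le_coe.2 (ENNReal.coe_lt_coe.1 (edist_nndist x y ▸ hsep x hx y hy)).le)
  obtain ⟨c, hc, rfl⟩ := exists_mem_Icc_smul_sub_eq hzyx hyx
  exact ⟨(c, x, y), ⟨hc, hx, hy⟩, rfl⟩

end Directions

/-- If `dimB̄(Γ) + dimH(F) < n - 1` for disjoint compact sets `Γ, F ⊆ ℝⁿ`, then there is a
direction `v` such that every line through a point of `Γ` in direction `v` misses `F`. -/
theorem exists_direction_avoiding (n : ℕ) (Γ F : Set (EuclideanSpace ℝ (Fin n)))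
    (hΓ : IsCompact Γ) (hF : IsCompact F) (hdisj : Disjoint Γ F)
    (hdim : ENNReal.ofReal (dimBUpper Γ) + dimH F < (n : ENNReal) - 1) :
    ∃ v : EuclideanSpace ℝ (Fin n), ‖v‖ = 1 ∧
      ∀ x ∈ Γ, ∀ y ∈ F, ∀ t : ℝ, y ≠ x + t • v := by
  have hn : 1 ≤ n := by exact_mod_cast (tsub_pos_iff_lt.1 (bot_le.trans_lt hdim)).le
  have : Nonempty (Fin n) := ⟨⟨0, hn⟩⟩
  refine exists_direction_avoiding_of_dimH_lt hΓ hF.isClosed hdisj ?_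
  calc dimH (Icc (-1 : ℝ) 1 ×ˢ (Γ ×ˢ F)) ≤ 1 + dimH (Γ ×ˢ F) := by
        simpa using (isBounded_Icc (-1 : ℝ) 1).dimH_prod_le_finrank_add (Γ ×ˢ F)
    _ ≤ 1 + (ENNReal.ofReal (dimBUpper Γ) + dimH F) :=
        add_le_add_right (hΓ.isBounded.dimH_prod_le_dimBUpper_add F) 1
    _ < 1 + ((n : ℝ≥0∞) - 1) := ENNReal.add_lt_add_left ENNReal.one_ne_top hdim
    _ = finrank ℝ (EuclideanSpace ℝ (Fin n)) := by
        rw [finrank_euclideanSpace_fin, add_tsub_cancel_of_le (by exact_mod_cast hn)]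
end
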